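/- arXiv:1112.0479 — 2 statements merged into one kernel-verified Lean document; each statement's English description precedes it below -/
import Mathlib

section
/- For every real number t > 0, the integral over a from 0 to infinity of (1 + (a^2 + a^{-2}) t^2)^{-N} with respect to the measure da/a is at most (2/N) · I_N(t), where I_N(t) = t^{-N} if t ≥ 1 and I_N(t) = 1 - N·log(t) if 0 < t ≤ 1, and N > 0. -/
/-!
Since `a² + a⁻² ≥ max (a², a⁻²)`, the integrand `(1 + (a² + a⁻²) t²)^{-N}` is bounded by `1`,
by `(a t)^{-2N}` and by `(a / t)^{2N}`. Integrating these three bounds against `da/a` over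
`(0, c]`, `(c, d]` and `(d, ∞)` gives `((c / t)^{2N} + (d t)^{-2N}) / (2N) + log (d / c)`.
Take `c = d = 1` when `t ≥ 1`, and `c = t`, `d = t⁻¹` when `t < 1`.
-/

open MeasureTheory Set

/-- `I_N(t) = t^{-N}` for `t ≥ 1` and `I_N(t) = 1 - N·log t` for `0 < t ≤ 1`. -/
noncomputable def IN (N t : ℝ) : ℝ := if 1 ≤ t then t ^ (-N) else 1 - N * Real.log t

open Real

noncomputable def kernelIN (N t a : ℝ) : ℝ := (1 + (a ^ 2 + (a⁻¹) ^ 2) * t ^ 2) ^ (-N)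

section Kernel

variable {N t a : ℝ}

theorem kernelIN_nonneg : 0 ≤ kernelIN N t a :=
  rpow_nonneg (by positivity) _

theorem kernelIN_inv : kernelIN N t a⁻¹ = kernelIN N t a := by
  rw [kernelIN, kernelIN, inv_inv, add_comm (a⁻¹ ^ 2)]

theorem kernelIN_le_one (hN : 0 ≤ N) : kernelIN N t a ≤ 1 :=
  rpow_le_one_of_one_le_of_nonpos (by nlinarith [sq_nonneg a, sq_nonneg a⁻¹, sq_nonneg t])
    (neg_nonpos.2 hN)

theorem kernelIN_le_mul_rpow (hN : 0 ≤ N) (ha : 0 < a) (ht : 0 < t) :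
    kernelIN N t a ≤ (a * t) ^ (-(2 * N)) := by
  have hle : (a * t) ^ 2 ≤ 1 + (a ^ 2 + a⁻¹ ^ 2) * t ^ 2 := by
    nlinarith [sq_nonneg (a⁻¹ * t)]
  calc kernelIN N t a ≤ ((a * t) ^ 2) ^ (-N) :=
        rpow_le_rpow_of_nonpos (by positivity) hle (neg_nonpos.2 hN)
    _ = (a * t) ^ (-(2 * N)) := by
        rw [← rpow_natCast, ← rpow_mul (by positivity)]; ring_nf

theorem kernelIN_le_div_rpow (hN : 0 ≤ N) (ha : 0 < a) (ht : 0 < t) :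
    kernelIN N t a ≤ (a / t) ^ (2 * N) := by
  calc kernelIN N t a = kernelIN N t a⁻¹ := kernelIN_inv.symm
    _ ≤ (a⁻¹ * t) ^ (-(2 * N)) := kernelIN_le_mul_rpow hN (inv_pos.2 ha) ht
    _ = (a / t) ^ (2 * N) := by
        rw [rpow_neg (by positivity), ← inv_rpow (by positivity), mul_inv, inv_inv, div_eq_mul_inv]

theorem measurable_kernelIN : Measurable (kernelIN N t) := by
  unfold kernelIN; fun_prop

end Kernel

section Powers

variable {s t c : ℝ}

theorem div_rpow_mul_inv {a : ℝ} (ha : 0 < a) (ht : 0 < t) :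
    (a / t) ^ s * a⁻¹ = a ^ (s - 1) / t ^ s := by
  rw [div_rpow ha.le ht.le, rpow_sub_one ha.ne']; ring

theorem mul_rpow_neg_mul_inv {a : ℝ} (ha : 0 < a) (ht : 0 < t) :
    (a * t) ^ (-s) * a⁻¹ = t ^ (-s) * a ^ (-s - 1) := by
  rw [mul_rpow ha.le ht.le, rpow_sub_one ha.ne']; ring

theorem integrableOn_Ioc_div_rpow_mul_inv (hs : 0 < s) (ht : 0 < t) (hc : 0 ≤ c) :
    IntegrableOn (fun a => (a / t) ^ s * a⁻¹) (Ioc 0 c) := by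
  have h := (intervalIntegral.intervalIntegrable_rpow' (a := 0) (b := c)
    (by linarith : -1 < s - 1)).div_const (t ^ s)
  rw [intervalIntegrable_iff_integrableOn_Ioc_of_le hc] at h
  exact h.congr_fun (fun a ha => (div_rpow_mul_inv ha.1 ht).symm) measurableSet_Ioc

theorem integral_Ioc_div_rpow_mul_inv (hs : 0 < s) (ht : 0 < t) (hc : 0 ≤ c) :
    ∫ a in Ioc 0 c, (a / t) ^ s * a⁻¹ = (c / t) ^ s / s := by
  rw [setIntegral_congr_fun measurableSet_Ioc (fun a ha => div_rpow_mul_inv ha.1 ht),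
    ← intervalIntegral.integral_of_le hc, intervalIntegral.integral_div,
    integral_rpow (Or.inl (by linarith)), sub_add_cancel, zero_rpow hs.ne', sub_zero,
    div_rpow hc ht.le]
  ring

theorem integrableOn_Ioi_mul_rpow_neg_mul_inv (hs : 0 < s) (ht : 0 < t) (hc : 0 < c) :
    IntegrableOn (fun a => (a * t) ^ (-s) * a⁻¹) (Ioi c) := by
  have h : IntegrableOn (fun a => t ^ (-s) * a ^ (-s - 1)) (Ioi c) :=
    (integrableOn_Ioi_rpow_of_lt (by linarith) hc).const_mul _
  exact h.congr_fun (fun a ha => (mul_rpow_neg_mul_inv (hc.trans ha) ht).symm)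
    measurableSet_Ioi

theorem integral_Ioi_mul_rpow_neg_mul_inv (hs : 0 < s) (ht : 0 < t) (hc : 0 < c) :
    ∫ a in Ioi c, (a * t) ^ (-s) * a⁻¹ = (c * t) ^ (-s) / s := by
  rw [setIntegral_congr_fun measurableSet_Ioi
      (fun a ha => mul_rpow_neg_mul_inv (hc.trans ha) ht),
    integral_const_mul, integral_Ioi_rpow_of_lt (by linarith) hc, sub_add_cancel,
    mul_rpow hc.le ht.le]
  field_simp

theorem integrableOn_Ioc_inv (hc : 0 < c) (d : ℝ) : IntegrableOn (fun a => a⁻¹) (Ioc c d) :=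
  (continuousOn_inv₀.mono fun _ ha => (hc.trans_le ha.1).ne').integrableOn_Icc.mono_set
    Ioc_subset_Icc_self

theorem integral_Ioc_inv {d : ℝ} (hc : 0 < c) (hcd : c ≤ d) :
    ∫ a in Ioc c d, a⁻¹ = log d - log c := by
  rw [← intervalIntegral.integral_of_le hcd, integral_inv_of_pos hc (hc.trans_le hcd),
    log_div (hc.trans_le hcd).ne' hc.ne']

end Powers

section Estimate

variable {N t : ℝ}

theorem setIntegral_kernelIN_mul_inv_le {s : Set ℝ} {b : ℝ → ℝ} (hs : MeasurableSet s)
    (hs0 : s ⊆ Ioi 0) (hb : IntegrableOn (fun a => b a * a⁻¹) s)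
    (hkb : ∀ a ∈ s, kernelIN N t a ≤ b a) :
    IntegrableOn (fun a => kernelIN N t a * a⁻¹) s ∧
      ∫ a in s, kernelIN N t a * a⁻¹ ≤ ∫ a in s, b a * a⁻¹ := by
  have hle : ∀ a ∈ s, kernelIN N t a * a⁻¹ ≤ b a * a⁻¹ := fun a ha =>
    mul_le_mul_of_nonneg_right (hkb a ha) (inv_nonneg.2 (hs0 ha).le)
  have hint : IntegrableOn (fun a => kernelIN N t a * a⁻¹) s := by
    refine hb.mono' (measurable_kernelIN.mul measurable_inv).aestronglyMeasurable
      ((ae_restrict_iff' hs).2 (ae_of_all _ fun a ha => ?_))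
    rw [Real.norm_of_nonneg (mul_nonneg kernelIN_nonneg (inv_nonneg.2 (hs0 ha).le))]
    exact hle a ha
  exact ⟨hint, setIntegral_mono_on hint hb hs hle⟩

theorem integral_kernelIN_mul_inv_le (hN : 0 < N) (ht : 0 < t) {c d : ℝ} (hc : 0 < c)
    (hcd : c ≤ d) :
    ∫ a in Ioi 0, kernelIN N t a * a⁻¹ ≤
      (c / t) ^ (2 * N) / (2 * N) + (log d - log c) + (d * t) ^ (-(2 * N)) / (2 * N) := by
  have h2N : 0 < 2 * N := by positivity
  have hd : 0 < d := hc.trans_le hcd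
  obtain ⟨hint₁, hle₁⟩ := setIntegral_kernelIN_mul_inv_le (b := fun a => (a / t) ^ (2 * N))
    measurableSet_Ioc (fun _ ha => ha.1) (integrableOn_Ioc_div_rpow_mul_inv h2N ht hc.le)
    (fun a ha => kernelIN_le_div_rpow hN.le ha.1 ht)
  obtain ⟨hint₂, hle₂⟩ := setIntegral_kernelIN_mul_inv_le (b := fun _ => 1)
    measurableSet_Ioc (fun _ ha => hc.trans ha.1) (by simpa using integrableOn_Ioc_inv hc d)
    (fun _ _ => kernelIN_le_one hN.le)
  obtain ⟨hint₃, hle₃⟩ := setIntegral_kernelIN_mul_inv_le (b := fun a => (a * t) ^ (-(2 * N)))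
    measurableSet_Ioi (fun _ ha => hd.trans ha) (integrableOn_Ioi_mul_rpow_neg_mul_inv h2N ht hd)
    (fun a ha => kernelIN_le_mul_rpow hN.le (hd.trans ha) ht)
  rw [integral_Ioc_div_rpow_mul_inv h2N ht hc.le] at hle₁
  simp only [one_mul, integral_Ioc_inv hc hcd] at hle₂
  rw [integral_Ioi_mul_rpow_neg_mul_inv h2N ht hd] at hle₃
  have hint₂₃ : IntegrableOn (fun a => kernelIN N t a * a⁻¹) (Ioi c) := by
    rw [← Ioc_union_Ioi_eq_Ioi hcd]; exact hint₂.union hint₃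
  rw [← Ioc_union_Ioi_eq_Ioi hc.le,
    setIntegral_union (Ioc_disjoint_Ioi le_rfl) measurableSet_Ioi hint₁ hint₂₃,
    ← Ioc_union_Ioi_eq_Ioi hcd,
    setIntegral_union (Ioc_disjoint_Ioi le_rfl) measurableSet_Ioi hint₂ hint₃]
  linarith

end Estimate

/-- For `N > 0` and `t > 0`,
`∫_0^∞ (1 + (a² + a⁻²) t²)^{-N} da/a ≤ (2/N) · I_N(t)`,
the measure `da/a` being the multiplicative Haar measure on `(0,∞)`. -/
theorem integral_est_IN (N : ℝ) (hN : 0 < N) (t : ℝ) (ht : 0 < t) :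
    (∫ a in Ioi (0 : ℝ), (1 + (a ^ 2 + (a⁻¹) ^ 2) * t ^ 2) ^ (-N) * a⁻¹)
      ≤ (2 / N) * IN N t := by
  by_cases h1t : 1 ≤ t
  · have hdecay : t ^ (-(2 * N)) ≤ t ^ (-N) := rpow_le_rpow_of_exponent_le h1t (by linarith)
    rw [IN, if_pos h1t]
    calc _ ≤ (1 / t) ^ (2 * N) / (2 * N) + (log 1 - log 1) + (1 * t) ^ (-(2 * N)) / (2 * N) :=
          integral_kernelIN_mul_inv_le hN ht one_pos le_rfl
      _ = t ^ (-(2 * N)) / N := by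
          rw [one_div, inv_rpow ht.le, ← rpow_neg ht.le, one_mul]; field_simp; ring
      _ ≤ 2 / N * t ^ (-N) := by
          rw [div_mul_eq_mul_div, div_le_div_iff_of_pos_right hN]
          nlinarith [rpow_nonneg ht.le (-N)]
  · have ht1 : t ≤ 1 := (not_le.1 h1t).le
    have htt : t ≤ t⁻¹ := ht1.trans ((one_le_inv₀ ht).2 ht1)
    rw [IN, if_neg h1t]
    calc _ ≤ (t / t) ^ (2 * N) / (2 * N) + (log t⁻¹ - log t)
            + (t⁻¹ * t) ^ (-(2 * N)) / (2 * N) :=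
          integral_kernelIN_mul_inv_le hN ht ht htt
      _ = 1 / N - 2 * log t := by
          rw [div_self ht.ne', inv_mul_cancel₀ ht.ne', one_rpow, one_rpow, log_inv]
          field_simp; ring
      _ ≤ 2 / N * (1 - N * log t) := by
          rw [mul_sub, mul_one, ← mul_assoc, div_mul_cancel₀ _ hN.ne']
          gcongr; norm_num
end

section
/- Let S = GL_1(ℝ)^+ act on points z ∈ ℝ \ {0} via the orbit parametrization a ↦ a, and consider the integral ∫_0^∞ (1 + (a^2 + a^{-2}) z^2)^{-N} da/a for N ≥ 1. Then there is a constant C (depending only on N) such that this integral is at most C · I_N(|z|). -/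
open MeasureTheory Set

/-!
The integrand is bounded by `min (1, (|z| a)^{-2N}, (|z| / a)^{-2N}) · a⁻¹`. Splitting `(0, ∞)` at
`s` and `s⁻¹` for any `0 < s ≤ 1` and integrating these three majorants gives
`∫ ≤ |z|^{-2N} s^{2N} / N + 2 log (1 / s)`; the choice `s = min |z| 1` makes this at most
`2 · I_N(|z|)` once `N ≥ 1`.
-/

open Real

theorem MeasureTheory.IntegrableOn.of_nonneg_of_le {α : Type*} [MeasurableSpace α] {μ : Measure α}
    {f g : α → ℝ} {s : Set α} (hg : IntegrableOn g s μ)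
    (hf : AEStronglyMeasurable f (μ.restrict s)) (hs : MeasurableSet s)
    (hf₀ : ∀ x ∈ s, 0 ≤ f x) (hfg : ∀ x ∈ s, f x ≤ g x) :
    IntegrableOn f s μ :=
  hg.mono' hf <| (ae_restrict_iff' hs).2 <| ae_of_all _ fun x hx => by
    rw [norm_of_nonneg (hf₀ x hx)]; exact hfg x hx

theorem setIntegral_Ioi_eq_add_add {E : Type*} [NormedAddCommGroup E] [NormedSpace ℝ E]
    {μ : Measure ℝ} {f : ℝ → E} {a b c : ℝ} (hab : a ≤ b) (hbc : b ≤ c)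
    (h₁ : IntegrableOn f (Ioc a b) μ) (h₂ : IntegrableOn f (Ioc b c) μ)
    (h₃ : IntegrableOn f (Ioi c) μ) :
    ∫ x in Ioi a, f x ∂μ =
      (∫ x in Ioc a b, f x ∂μ) + (∫ x in Ioc b c, f x ∂μ) + ∫ x in Ioi c, f x ∂μ := by
  have h₂₃ : IntegrableOn f (Ioi b) μ := Ioc_union_Ioi_eq_Ioi hbc ▸ h₂.union h₃
  rw [← Ioc_union_Ioi_eq_Ioi hab,
    setIntegral_union (Ioc_disjoint_Ioi le_rfl) measurableSet_Ioi h₁ h₂₃,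
    ← Ioc_union_Ioi_eq_Ioi hbc,
    setIntegral_union (Ioc_disjoint_Ioi le_rfl) measurableSet_Ioi h₂ h₃, add_assoc]

theorem integrableOn_Ioc_zero_rpow_sub_one {p s : ℝ} (hp : 0 < p) (hs : 0 ≤ s) :
    IntegrableOn (fun x : ℝ => x ^ (p - 1)) (Ioc 0 s) :=
  (intervalIntegrable_iff_integrableOn_Ioc_of_le hs).1 <|
    intervalIntegral.intervalIntegrable_rpow' (by linarith)

theorem integral_Ioc_zero_rpow_sub_one {p s : ℝ} (hp : 0 < p) (hs : 0 ≤ s) :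
    ∫ x in Ioc 0 s, x ^ (p - 1) = s ^ p / p := by
  rw [← intervalIntegral.integral_of_le hs, integral_rpow (Or.inl (by linarith)),
    sub_add_cancel, zero_rpow hp.ne', sub_zero]

theorem integrableOn_Ioi_rpow_neg_sub_one {p c : ℝ} (hp : 0 < p) (hc : 0 < c) :
    IntegrableOn (fun x : ℝ => x ^ (-p - 1)) (Ioi c) :=
  integrableOn_Ioi_rpow_of_lt (by linarith) hc

theorem integral_Ioi_rpow_neg_sub_one {p c : ℝ} (hp : 0 < p) (hc : 0 < c) :
    ∫ x in Ioi c, x ^ (-p - 1) = c ^ (-p) / p := by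
  rw [integral_Ioi_rpow_of_lt (by linarith) hc, sub_add_cancel, neg_div_neg_eq]

theorem integrableOn_Ioc_inv_s17 {a b : ℝ} (ha : 0 < a) :
    IntegrableOn (fun x : ℝ => x⁻¹) (Ioc a b) :=
  ((continuousOn_inv₀.mono fun _ hx => (ha.trans_le hx.1).ne').integrableOn_Icc).mono_set
    Ioc_subset_Icc_self

theorem integral_Ioc_inv_s17 {a b : ℝ} (ha : 0 < a) (hab : a ≤ b) :
    ∫ x in Ioc a b, x⁻¹ = log (b / a) := by
  rw [← intervalIntegral.integral_of_le hab, integral_inv_of_pos ha (ha.trans_le hab)]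

theorem sq_mul_rpow_neg {t x : ℝ} (N : ℝ) (ht : 0 ≤ t) (hx : 0 ≤ x) :
    ((t * x) ^ 2) ^ (-N) = t ^ (-(2 * N)) * x ^ (-(2 * N)) := by
  rw [← rpow_natCast_mul (by positivity), mul_rpow ht hx]
  norm_num

noncomputable def orbitalDensity (N z a : ℝ) : ℝ :=
  (1 + (a ^ 2 + a⁻¹ ^ 2) * z ^ 2) ^ (-N) * a⁻¹

namespace orbitalDensity

variable {N z a : ℝ}

theorem nonneg (ha : 0 ≤ a) : 0 ≤ orbitalDensity N z a := by
  unfold orbitalDensity; positivity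

theorem le_rpow_mul_inv (hN : 0 ≤ N) (ha : 0 ≤ a) {w : ℝ} (hw : 0 < w)
    (hwa : w ≤ 1 + (a ^ 2 + a⁻¹ ^ 2) * z ^ 2) : orbitalDensity N z a ≤ w ^ (-N) * a⁻¹ :=
  mul_le_mul_of_nonneg_right (rpow_le_rpow_of_nonpos hw hwa (neg_nonpos.2 hN)) (inv_nonneg.2 ha)

theorem le_inv (hN : 0 ≤ N) (ha : 0 ≤ a) : orbitalDensity N z a ≤ a⁻¹ := by
  simpa using le_rpow_mul_inv hN ha one_pos (le_add_of_nonneg_right (by positivity))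

theorem le_abs_rpow_mul_rpow_sub_one (hN : 0 ≤ N) (ha : 0 < a) (hz : z ≠ 0) :
    orbitalDensity N z a ≤ |z| ^ (-(2 * N)) * a ^ (2 * N - 1) := by
  have hw : (|z| * a⁻¹) ^ 2 ≤ 1 + (a ^ 2 + a⁻¹ ^ 2) * z ^ 2 := by
    nlinarith [mul_pow |z| a⁻¹ 2, sq_abs z, sq_nonneg (a * z)]
  refine (le_rpow_mul_inv hN ha.le (by positivity) hw).trans_eq ?_
  rw [sq_mul_rpow_neg N (abs_nonneg z) (inv_nonneg.2 ha.le), inv_rpow ha.le, ← rpow_neg ha.le,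
    ← rpow_neg_one a, mul_assoc, ← rpow_add ha]
  ring_nf

theorem le_abs_rpow_mul_rpow_neg_sub_one (hN : 0 ≤ N) (ha : 0 < a) (hz : z ≠ 0) :
    orbitalDensity N z a ≤ |z| ^ (-(2 * N)) * a ^ (-(2 * N) - 1) := by
  have hw : (|z| * a) ^ 2 ≤ 1 + (a ^ 2 + a⁻¹ ^ 2) * z ^ 2 := by
    nlinarith [mul_pow |z| a 2, sq_abs z, sq_nonneg (a⁻¹ * z)]
  refine (le_rpow_mul_inv hN ha.le (by positivity) hw).trans_eq ?_
  rw [sq_mul_rpow_neg N (abs_nonneg z) ha.le, ← rpow_neg_one a, mul_assoc, ← rpow_add ha]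
  ring_nf

end orbitalDensity

theorem setIntegral_orbitalDensity_le {N z s : ℝ} (hN : 0 < N) (hz : z ≠ 0) (hs : 0 < s)
    (hs₁ : s ≤ 1) :
    ∫ a in Ioi 0, orbitalDensity N z a ≤ |z| ^ (-(2 * N)) * s ^ (2 * N) / N - 2 * log s := by
  have hs' : 0 < s⁻¹ := inv_pos.2 hs
  have hsS : s ≤ s⁻¹ := hs₁.trans (one_le_inv₀ hs |>.2 hs₁)
  have hf : AEStronglyMeasurable (orbitalDensity N z) :=
    Measurable.aestronglyMeasurable (by unfold orbitalDensity; fun_prop)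
  have hg₁ : IntegrableOn (fun a => |z| ^ (-(2 * N)) * a ^ (2 * N - 1)) (Ioc 0 s) :=
    (integrableOn_Ioc_zero_rpow_sub_one (by positivity : 0 < 2 * N) hs.le).const_mul
      (|z| ^ (-(2 * N)))
  have hg₂ := integrableOn_Ioc_inv_s17 (b := s⁻¹) hs
  have hg₃ : IntegrableOn (fun a => |z| ^ (-(2 * N)) * a ^ (-(2 * N) - 1)) (Ioi s⁻¹) :=
    (integrableOn_Ioi_rpow_neg_sub_one (by positivity : 0 < 2 * N) hs').const_mul
      (|z| ^ (-(2 * N)))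
  have h₁ : ∀ a ∈ Ioc 0 s, orbitalDensity N z a ≤ |z| ^ (-(2 * N)) * a ^ (2 * N - 1) :=
    fun a ha => orbitalDensity.le_abs_rpow_mul_rpow_sub_one hN.le ha.1 hz
  have h₂ : ∀ a ∈ Ioc s s⁻¹, orbitalDensity N z a ≤ a⁻¹ :=
    fun a ha => orbitalDensity.le_inv hN.le (hs.trans ha.1).le
  have h₃ : ∀ a ∈ Ioi s⁻¹, orbitalDensity N z a ≤ |z| ^ (-(2 * N)) * a ^ (-(2 * N) - 1) :=
    fun a ha => orbitalDensity.le_abs_rpow_mul_rpow_neg_sub_one hN.le (hs'.trans ha) hz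
  have hf₁ := hg₁.of_nonneg_of_le hf.restrict measurableSet_Ioc
    (fun a ha => orbitalDensity.nonneg ha.1.le) h₁
  have hf₂ := hg₂.of_nonneg_of_le hf.restrict measurableSet_Ioc
    (fun a ha => orbitalDensity.nonneg (hs.trans ha.1).le) h₂
  have hf₃ := hg₃.of_nonneg_of_le hf.restrict measurableSet_Ioi
    (fun a ha => orbitalDensity.nonneg (hs'.trans ha).le) h₃
  rw [setIntegral_Ioi_eq_add_add hs.le hsS hf₁ hf₂ hf₃]
  calc _ ≤ (∫ a in Ioc 0 s, |z| ^ (-(2 * N)) * a ^ (2 * N - 1)) + (∫ a in Ioc s s⁻¹, a⁻¹)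
        + ∫ a in Ioi s⁻¹, |z| ^ (-(2 * N)) * a ^ (-(2 * N) - 1) := by
        gcongr ?_ + ?_ + ?_
        · exact setIntegral_mono_on hf₁ hg₁ measurableSet_Ioc h₁
        · exact setIntegral_mono_on hf₂ hg₂ measurableSet_Ioc h₂
        · exact setIntegral_mono_on hf₃ hg₃ measurableSet_Ioi h₃
    _ = _ := by
      have hlog : log (s⁻¹ / s) = -2 * log s := by
        rw [log_div (inv_ne_zero hs.ne') hs.ne', log_inv]; ring
      rw [integral_const_mul, integral_const_mul,
        integral_Ioc_zero_rpow_sub_one (by positivity) hs.le, integral_Ioc_inv_s17 hs hsS, hlog,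
        integral_Ioi_rpow_neg_sub_one (by positivity) hs', inv_rpow hs.le,
        rpow_neg hs.le, inv_inv]
      field_simp
      ring

/-- For `N ≥ 1` there is a constant `C` (depending only on `N`) such that for every
`z ≠ 0`, `∫_0^∞ (1 + (a² + a⁻²) z²)^{-N} da/a ≤ C · I_N(|z|)`. -/
theorem orbital_integral_gl1_estimate (N : ℝ) (hN : 1 ≤ N) :
    ∃ C : ℝ, ∀ z : ℝ, z ≠ 0 →
      (∫ a in Ioi (0 : ℝ), (1 + (a ^ 2 + (a⁻¹) ^ 2) * z ^ 2) ^ (-N) * a⁻¹)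
        ≤ C * IN N |z| := by
  have hN₀ : 0 < N := one_pos.trans_le hN
  have hN₂ : N⁻¹ ≤ 2 := (inv_le_one_of_one_le₀ hN).trans one_le_two
  refine ⟨2, fun z hz => ?_⟩
  have hz₀ : 0 < |z| := abs_pos.2 hz
  rcases le_or_gt 1 |z| with hz₁ | hz₁
  · refine (setIntegral_orbitalDensity_le hN₀ hz one_pos le_rfl).trans ?_
    have hpow : |z| ^ (-(2 * N)) ≤ |z| ^ (-N) := rpow_le_rpow_of_exponent_le hz₁ (by linarith)
    rw [IN, if_pos hz₁, one_rpow, log_one, div_eq_mul_inv]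
    nlinarith [rpow_nonneg hz₀.le (-(2 * N))]
  · refine (setIntegral_orbitalDensity_le hN₀ hz hz₀ hz₁.le).trans ?_
    have hlog : log |z| < 0 := log_neg hz₀ hz₁
    rw [IN, if_neg hz₁.not_ge, ← rpow_add hz₀, neg_add_cancel, rpow_zero, one_div]
    nlinarith
end
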